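/- Let (X,ℓ₀) and (X̃,ℓ̃₀) be isomorphic sets of data for the symplectic differential problem via a C¹ curve φ₀ : [a,b] → Sp(2n,ℝ;L₀) with upper-left block Z(t), so that X̃ = φ₀'φ₀⁻¹ + φ₀Xφ₀⁻¹ and ℓ̃₀ = φ₀(a)(ℓ₀). Then a C² curve v is an (X,ℓ₀)-solution if and only if t ↦ Z(t)v(t) is an (X̃,ℓ̃₀)-solution; consequently the two problems have the same focal instants with the same multiplicities. -/

import Mathlib

open Set

noncomputable section

abbrev V (n : ℕ) : Type := Fin n → ℝ
abbrev Dl (n : ℕ) : Type := V n →L[ℝ] ℝ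
abbrev E (n : ℕ) : Type := V n × Dl n

/-- The canonical symplectic form on ℝⁿ ⊕ (ℝⁿ)*. -/
def omegaF (n : ℕ) (x y : E n) : ℝ := y.2 x.1 - x.2 y.1

/-- `ρ = (v,α)` is an `(X,ℓ₀)`-solution: `ρ' = Xρ` on `[a,b]` and `ρ(a) ∈ ℓ₀`. -/
def IsSolE (n : ℕ) (a b : ℝ) (X : ℝ → E n →L[ℝ] E n) (ℓ₀ : Submodule ℝ (E n))
    (ρ : ℝ → E n) : Prop :=
  (∀ t ∈ Icc a b, HasDerivWithinAt ρ (X t (ρ t)) (Icc a b) t) ∧ ρ a ∈ ℓ₀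

set_option maxHeartbeats 1000000 in
set_option synthInstance.maxHeartbeats 200000 in
/-- If `(X,ℓ₀)` and `(X̃,ℓ̃₀)` are isomorphic via a `C¹` curve `φ₀` of
symplectomorphisms preserving `L₀` (so `X̃ = φ₀'φ₀⁻¹ + φ₀Xφ₀⁻¹`,
`ℓ̃₀ = φ₀(a)(ℓ₀)`), then `ρ` is an `(X,ℓ₀)`-solution iff `t ↦ φ₀(t)ρ(t)` is an
`(X̃,ℓ̃₀)`-solution; the first component of `φ₀(t)ρ(t)` is `Z(t)` applied to the
first component of `ρ(t)`; and the two problems have the same focal instants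
with the same multiplicities. -/
theorem stmt_16 (n : ℕ) (a b : ℝ) (hab : a ≤ b)
    (φ₀ ψ₀ dφ : ℝ → E n →L[ℝ] E n)
    (hinv : ∀ t ∈ Icc a b, (∀ x : E n, ψ₀ t (φ₀ t x) = x) ∧
      (∀ x : E n, φ₀ t (ψ₀ t x) = x))
    (hω : ∀ t ∈ Icc a b, ∀ x y : E n,
      omegaF n (φ₀ t x) (φ₀ t y) = omegaF n x y)
    (hL₀ : ∀ t ∈ Icc a b,
      (fun x => φ₀ t x) '' {p : E n | p.1 = 0} = {p : E n | p.1 = 0})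
    (hdφ : ∀ t ∈ Icc a b, HasDerivWithinAt φ₀ (dφ t) (Icc a b) t)
    (X Xt : ℝ → E n →L[ℝ] E n)
    (hXt : ∀ t ∈ Icc a b, Xt t = dφ t ∘L ψ₀ t + (φ₀ t ∘L X t) ∘L ψ₀ t)
    (ℓ₀ ℓt₀ : Submodule ℝ (E n))
    (hℓt₀ : ℓt₀ = Submodule.map (φ₀ a).toLinearMap ℓ₀) :
    -- solutions correspond under φ₀ (whose first component is Z v):
    (∀ ρ : ℝ → E n, IsSolE n a b X ℓ₀ ρ ↔
      IsSolE n a b Xt ℓt₀ (fun t => φ₀ t (ρ t))) ∧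
    (∀ t ∈ Icc a b, ∀ x : E n, (φ₀ t x).1 = (φ₀ t (x.1, 0)).1) ∧
    -- same focal instants with the same multiplicities:
    (∀ t ∈ Ioc a b, ∀ m : ℕ,
      (∃ ρs : Fin m → (ℝ → E n), LinearIndependent ℝ ρs ∧
        ∀ i, IsSolE n a b X ℓ₀ (ρs i) ∧ ((ρs i) t).1 = 0) ↔
      (∃ σs : Fin m → (ℝ → E n), LinearIndependent ℝ σs ∧
        ∀ i, IsSolE n a b Xt ℓt₀ (σs i) ∧ ((σs i) t).1 = 0)) := by
  have ha : a ∈ Icc a b := ⟨le_refl a, hab⟩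
  have hψφ : ∀ t ∈ Icc a b, ∀ x : E n, ψ₀ t (φ₀ t x) = x := fun t ht => (hinv t ht).1
  have hφψ : ∀ t ∈ Icc a b, ∀ x : E n, φ₀ t (ψ₀ t x) = x := fun t ht => (hinv t ht).2
  -- the unit associated to φ₀ t
  have hunit : ∀ t ∈ Icc a b, ∃ u : (E n →L[ℝ] E n)ˣ, (u : E n →L[ℝ] E n) = φ₀ t ∧
      ((u⁻¹ : (E n →L[ℝ] E n)ˣ) : E n →L[ℝ] E n) = ψ₀ t := by
    intro t ht
    refine ⟨⟨φ₀ t, ψ₀ t, ?_, ?_⟩, rfl, rfl⟩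
    · apply ContinuousLinearMap.ext; intro x
      simp [ContinuousLinearMap.mul_apply, hφψ t ht x]
    · apply ContinuousLinearMap.ext; intro x
      simp [ContinuousLinearMap.mul_apply, hψφ t ht x]
  have hRinv : ∀ t ∈ Icc a b, Ring.inverse (φ₀ t) = ψ₀ t := by
    intro t ht
    obtain ⟨u, hu1, hu2⟩ := hunit t ht
    rw [← hu1, Ring.inverse_unit, hu2]
  -- derivative of ψ₀
  have hdψ : ∀ t ∈ Icc a b,
      HasDerivWithinAt ψ₀ (-(ψ₀ t * dφ t * ψ₀ t)) (Icc a b) t := by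
    intro t ht
    obtain ⟨u, hu1, hu2⟩ := hunit t ht
    have hF := hasFDerivAt_ringInverse (𝕜 := ℝ) (R := E n →L[ℝ] E n) u
    rw [hu1] at hF
    have h := hF.comp_hasDerivWithinAt (F := E n →L[ℝ] E n) (E := E n →L[ℝ] E n) t (hdφ t ht)
    have h2 : HasDerivWithinAt (fun s => Ring.inverse (φ₀ s))
        (-(ψ₀ t * dφ t * ψ₀ t)) (Icc a b) t := by
      refine h.congr_deriv ?_
      simp [hu2, mul_assoc]
    exact h2.congr (fun s hs => (hRinv s hs).symm) (hRinv t ht).symm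
  -- forward derivative transfer
  have fwd : ∀ ρ : ℝ → E n,
      (∀ t ∈ Icc a b, HasDerivWithinAt ρ (X t (ρ t)) (Icc a b) t) →
      ∀ t ∈ Icc a b, HasDerivWithinAt (fun s => φ₀ s (ρ s))
        (Xt t (φ₀ t (ρ t))) (Icc a b) t := by
    intro ρ hρ t ht
    have h := (hdφ t ht).clm_apply (hρ t ht)
    refine h.congr_deriv ?_
    rw [hXt t ht]
    simp [hψφ t ht]
  -- backward derivative transfer
  have bwd : ∀ σ : ℝ → E n,
      (∀ t ∈ Icc a b, HasDerivWithinAt σ (Xt t (σ t)) (Icc a b) t) →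
      ∀ t ∈ Icc a b, HasDerivWithinAt (fun s => ψ₀ s (σ s))
        (X t (ψ₀ t (σ t))) (Icc a b) t := by
    intro σ hσ t ht
    have h := (hdψ t ht).clm_apply (hσ t ht)
    refine h.congr_deriv ?_
    rw [hXt t ht]
    simp [ContinuousLinearMap.mul_apply, hψφ t ht, hφψ t ht]
  -- L₀ preservation
  have hφL : ∀ t ∈ Icc a b, ∀ x : E n, x.1 = 0 → (φ₀ t x).1 = 0 := by
    intro t ht x hx
    have : φ₀ t x ∈ {p : E n | p.1 = 0} := by
      rw [← hL₀ t ht]; exact ⟨x, hx, rfl⟩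
    exact this
  have hψL : ∀ t ∈ Icc a b, ∀ x : E n, x.1 = 0 → (ψ₀ t x).1 = 0 := by
    intro t ht x hx
    have hx' : x ∈ (fun x => φ₀ t x) '' {p : E n | p.1 = 0} := by
      rw [hL₀ t ht]; exact hx
    obtain ⟨y, hy, rfl⟩ := hx'
    rw [hψφ t ht]; exact hy
  -- the main iff
  have main : ∀ ρ : ℝ → E n, IsSolE n a b X ℓ₀ ρ ↔
      IsSolE n a b Xt ℓt₀ (fun t => φ₀ t (ρ t)) := by
    intro ρ
    constructor
    · rintro ⟨hρ, hρa⟩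
      refine ⟨fwd ρ hρ, ?_⟩
      rw [hℓt₀]
      exact ⟨ρ a, hρa, rfl⟩
    · rintro ⟨hσ, hσa⟩
      constructor
      · intro t ht
        have h := (bwd _ hσ t ht).congr
          (fun s hs => (hψφ s hs (ρ s)).symm) (hψφ t ht (ρ t)).symm
        rwa [hψφ t ht] at h
      · rw [hℓt₀] at hσa
        obtain ⟨y, hy, hyeq⟩ := hσa
        simp only [ContinuousLinearMap.coe_coe] at hyeq
        have : ρ a = y := by
          have h := congrArg (ψ₀ a) hyeq
          simp only [hψφ a ha] at h
          exact h.symm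
        rwa [this]
  refine ⟨main, ?_, ?_⟩
  · intro t ht x
    have hx : x = (x.1, 0) + (0, x.2) := by ext <;> simp
    conv_lhs => rw [hx]
    rw [map_add, Prod.fst_add, hφL t ht (0, x.2) rfl, add_zero]
  · -- focal instants
    intro t ht m
    have ht' : t ∈ Icc a b := ⟨le_of_lt ht.1, ht.2⟩
    -- clamping
    set c : ℝ → ℝ := fun u => max a (min u b) with hc
    have hcmem : ∀ u, c u ∈ Icc a b :=
      fun u => ⟨le_max_left _ _, max_le hab (min_le_right _ _)⟩
    have hceq : ∀ u ∈ Icc a b, c u = u := fun u hu => by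
      simp only [hc, min_eq_left hu.2, max_eq_right hu.1]
    constructor
    · rintro ⟨ρs, hLI, hsol⟩
      refine ⟨fun i u => φ₀ (c u) (ρs i u), ?_, ?_⟩
      · rw [Fintype.linearIndependent_iff] at hLI ⊢
        intro g hg i
        refine hLI g ?_ i
        funext u
        have h1 := congrFun hg u
        simp only [Finset.sum_apply, Pi.smul_apply, Pi.zero_apply] at h1 ⊢
        have h2 : φ₀ (c u) (∑ i, g i • ρs i u) = 0 := by
          rw [map_sum]
          simpa [map_smul] using h1
        have := congrArg (ψ₀ (c u)) h2
        rwa [hψφ _ (hcmem u), map_zero] at this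
      · intro i
        obtain ⟨⟨hρd, hρa⟩, hρt⟩ := hsol i
        refine ⟨⟨?_, ?_⟩, ?_⟩
        · intro s hs
          have h2 : HasDerivWithinAt (fun u => φ₀ (c u) (ρs i u))
              (Xt s (φ₀ s (ρs i s))) (Icc a b) s :=
            (fwd _ hρd s hs).congr
              (fun u hu => by show φ₀ (c u) (ρs i u) = φ₀ u (ρs i u); rw [hceq u hu])
              (by show φ₀ (c s) (ρs i s) = φ₀ s (ρs i s); rw [hceq s hs])
          show HasDerivWithinAt (fun u => φ₀ (c u) (ρs i u))
            (Xt s (φ₀ (c s) (ρs i s))) (Icc a b) s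
          rw [hceq s hs]
          exact h2
        · show φ₀ (c a) (ρs i a) ∈ ℓt₀
          rw [hceq a ha, hℓt₀]
          exact ⟨ρs i a, hρa, rfl⟩
        · show (φ₀ (c t) (ρs i t)).1 = 0
          rw [hceq t ht']
          exact hφL t ht' _ hρt
    · rintro ⟨σs, hLI, hsol⟩
      refine ⟨fun i u => ψ₀ (c u) (σs i u), ?_, ?_⟩
      · rw [Fintype.linearIndependent_iff] at hLI ⊢
        intro g hg i
        refine hLI g ?_ i
        funext u
        have h1 := congrFun hg u
        simp only [Finset.sum_apply, Pi.smul_apply, Pi.zero_apply] at h1 ⊢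
        have h2 : ψ₀ (c u) (∑ i, g i • σs i u) = 0 := by
          rw [map_sum]
          simpa [map_smul] using h1
        have := congrArg (φ₀ (c u)) h2
        rwa [hφψ _ (hcmem u), map_zero] at this
      · intro i
        obtain ⟨⟨hσd, hσa⟩, hσt⟩ := hsol i
        refine ⟨⟨?_, ?_⟩, ?_⟩
        · intro s hs
          have h2 : HasDerivWithinAt (fun u => ψ₀ (c u) (σs i u))
              (X s (ψ₀ s (σs i s))) (Icc a b) s :=
            (bwd _ hσd s hs).congr
              (fun u hu => by show ψ₀ (c u) (σs i u) = ψ₀ u (σs i u); rw [hceq u hu])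
              (by show ψ₀ (c s) (σs i s) = ψ₀ s (σs i s); rw [hceq s hs])
          show HasDerivWithinAt (fun u => ψ₀ (c u) (σs i u))
            (X s (ψ₀ (c s) (σs i s))) (Icc a b) s
          rw [hceq s hs]
          exact h2
        · show ψ₀ (c a) (σs i a) ∈ ℓ₀
          rw [hceq a ha]
          rw [hℓt₀] at hσa
          obtain ⟨y, hy, hyeq⟩ := hσa
          simp only [ContinuousLinearMap.coe_coe] at hyeq
          rw [← hyeq, hψφ a ha]
          exact hy
        · show (ψ₀ (c t) (σs i t)).1 = 0
          rw [hceq t ht']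
          exact hψL t ht' _ hσt
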